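/- Let (p_k^{(1)}) and (p_k^{(2)}) be critical offspring distributions with variances σ_1², σ_2² ∈ (0,∞), pgfs Φ_1, Φ_2, tree-size probabilities (q_n^{(1)}), (q_n^{(2)}), and suppose Φ_1(t) ≤ Φ_2(t) for all t ∈ (0,1). Then: (i) for every real α < 0, ∑_{n≥1} n^α q_n^{(1)} ≤ ∑_{n≥1} n^α q_n^{(2)}; (ii) for every real α with 0 < α < 1/2, ∑_{n≥1} n^α q_n^{(1)} ≥ ∑_{n≥1} n^α q_n^{(2)}; (iii) ∑_{n≥1} q_n^{(1)} log n ≥ ∑_{n≥1} q_n^{(2)} log n. -/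

import Mathlib

/-!
Since `y = z Φ(y)` and `Φ₂` is convex with `Φ₂(1) = 1`, the inequality `Φ₁ ≤ Φ₂` forces
`y₁ ≤ y₂` on `(0, 1)`. Moments are Mellin transforms of `y`: for `α < 0`,
`Γ(-α) ∑ n^α q_n = ∫₀^∞ t^(-α-1) y(e^(-t)) dt`, and for `0 < α < 1`,
`c_α ∑ n^α q_n = ∫₀^∞ t^(-α-1) (1 - y(e^(-t))) dt` with `c_α = ∫₀^∞ x^(-α-1) (1 - e^(-x)) dx`,
so the order of the `y`'s passes to the moments, reversed for `α > 0`. For `α < 1/2` the second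
integral is finite because positive variance gives `Φ(s) ≥ s + c (1 - s)²` near `1`, hence
`1 - y(e^(-t)) = O(√t)`. The logarithmic moment is the limit of `(∑ n^α q_n - 1) / α` as `α → 0⁺`.
-/

open MeasureTheory Set Filter
open scoped ENNReal Topology

lemma summable_of_tsum_ne_zero {ι : Type*} {f : ι → ℝ} (h : ∑' n, f n ≠ 0) : Summable f := by
  by_contra hs
  exact h (tsum_eq_zero_of_not_summable hs)

lemma summable_of_tsum_ofReal_ne_top {ι : Type*} {f : ι → ℝ} (hf : ∀ n, 0 ≤ f n)
    (h : ∑' n, ENNReal.ofReal (f n) ≠ ⊤) : Summable f :=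
  (ENNReal.summable_toReal h).congr fun n => ENNReal.toReal_ofReal (hf n)

lemma summable_and_tsum_le_of_tsum_ofReal_le {ι : Type*} {f g : ι → ℝ} (hf : ∀ n, 0 ≤ f n)
    (hg : ∀ n, 0 ≤ g n) (hgs : Summable g)
    (h : ∑' n, ENNReal.ofReal (f n) ≤ ∑' n, ENNReal.ofReal (g n)) :
    Summable f ∧ ∑' n, f n ≤ ∑' n, g n := by
  rw [← ENNReal.ofReal_tsum_of_nonneg hg hgs] at h
  have hfs := summable_of_tsum_ofReal_ne_top hf (ne_top_of_le_ne_top ENNReal.ofReal_ne_top h)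
  rw [← ENNReal.ofReal_tsum_of_nonneg hf hfs, ENNReal.ofReal_le_ofReal_iff (tsum_nonneg hg)] at h
  exact ⟨hfs, h⟩

lemma exp_neg_mem_Ioo {t : ℝ} (ht : 0 < t) : Real.exp (-t) ∈ Ioo (0 : ℝ) 1 :=
  ⟨Real.exp_pos _, Real.exp_lt_one_iff.2 (neg_lt_zero.2 ht)⟩

noncomputable def pgf (p : ℕ → ℝ) (t : ℝ) : ℝ := ∑' k, p k * t ^ k

section Pgf

variable {p : ℕ → ℝ}

lemma summable_mul_pow (hp : ∀ k, 0 ≤ p k) (hs : Summable p) {t : ℝ} (ht : t ∈ Icc (0 : ℝ) 1) :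
    Summable fun k => p k * t ^ k :=
  hs.of_nonneg_of_le (fun k => mul_nonneg (hp k) (pow_nonneg ht.1 k))
    fun k => mul_le_of_le_one_right (hp k) (pow_le_one₀ ht.1 ht.2)

lemma pgf_nonneg (hp : ∀ k, 0 ≤ p k) {t : ℝ} (ht : 0 ≤ t) : 0 ≤ pgf p t :=
  tsum_nonneg fun k => mul_nonneg (hp k) (pow_nonneg ht k)

lemma pgf_one (p : ℕ → ℝ) : pgf p 1 = ∑' k, p k := by
  simp [pgf]

lemma convexOn_pgf (hp : ∀ k, 0 ≤ p k) (hs : Summable p) : ConvexOn ℝ (Icc 0 1) (pgf p) := by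
  refine ⟨convex_Icc 0 1, fun x hx y hy a b ha hb hab => ?_⟩
  have hxy : a • x + b • y ∈ Icc (0 : ℝ) 1 := convex_Icc 0 1 hx hy ha hb hab
  have hsx := summable_mul_pow hp hs hx
  have hsy := summable_mul_pow hp hs hy
  simp only [pgf, smul_eq_mul] at hxy ⊢
  rw [← tsum_mul_left, ← tsum_mul_left, ← (hsx.mul_left a).tsum_add (hsy.mul_left b)]
  refine (summable_mul_pow hp hs hxy).tsum_le_tsum (fun k => ?_)
    ((hsx.mul_left a).add (hsy.mul_left b))
  have hk := (convexOn_pow k).2 (mem_Ici.2 hx.1) (mem_Ici.2 hy.1) ha hb hab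
  simp only [smul_eq_mul] at hk
  nlinarith [mul_le_mul_of_nonneg_left hk (hp k)]

lemma pgf_le_self (hp : ∀ k, 0 ≤ p k) (hp0 : p 0 = 0) (hsum : ∑' k, p k = 1) {t : ℝ}
    (ht : t ∈ Icc (0 : ℝ) 1) : pgf p t ≤ t := by
  have hs := summable_of_tsum_ne_zero (hsum ▸ one_ne_zero)
  calc pgf p t ≤ ∑' k, p k * t := by
        refine (summable_mul_pow hp hs ht).tsum_le_tsum (fun k => ?_) (hs.mul_right t)
        rcases k.eq_zero_or_pos with rfl | hk
        · simp [hp0]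
        · exact mul_le_mul_of_nonneg_left (pow_le_of_le_one ht.1 ht.2 hk.ne') (hp k)
    _ = t := by rw [tsum_mul_right, hsum, one_mul]

end Pgf

/-- Convexity of `Φ` with `Φ 1 = 1` puts the chord from `(b, Φ b)` to `(1, 1)` above the graph
on `[b, 1]`; since `b = z Φ b` and `z < 1`, the map `s ↦ z Φ s` stays strictly below `s` on
`(b, 1]`. -/
lemma le_of_le_mul_of_eq_mul {Φ : ℝ → ℝ} (hΦ : ConvexOn ℝ (Icc 0 1) Φ) (hΦ1 : Φ 1 = 1)
    {z a b : ℝ} (hz0 : 0 ≤ z) (hz1 : z < 1) (ha : a ∈ Icc (0 : ℝ) 1) (hb0 : 0 ≤ b) (hbz : b ≤ z)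
    (hb : b = z * Φ b) (hza : a ≤ z * Φ a) : a ≤ b := by
  by_contra! hba
  have hb1 : 0 < 1 - b := by linarith
  set μ := (a - b) / (1 - b)
  have hμ : 0 < μ := div_pos (by linarith) hb1
  have hcomb : (1 - μ) * b + μ * 1 = a := by simp only [μ]; field_simp; ring
  have hμ1 : μ ≤ 1 := (div_le_one hb1).2 (by linarith [ha.2])
  have hchord : Φ a ≤ (1 - μ) * Φ b + μ * Φ 1 := by
    have := hΦ.2 ⟨hb0, by linarith⟩ (right_mem_Icc.2 zero_le_one) (sub_nonneg.2 hμ1) hμ.le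
      (sub_add_cancel 1 μ)
    simpa only [smul_eq_mul, hcomb] using this
  rw [hΦ1] at hchord
  nlinarith [mul_le_mul_of_nonneg_left hchord hz0, mul_lt_mul_of_pos_left hz1 hμ]

lemma pgf_le_pgf_of_fixed_point {p₁ p₂ q₁ q₂ : ℕ → ℝ} (hp₂ : ∀ k, 0 ≤ p₂ k)
    (hp₂sum : ∑' k, p₂ k = 1) (hq₁ : ∀ n, 0 ≤ q₁ n) (hq₁0 : q₁ 0 = 0) (hq₁sum : ∑' n, q₁ n = 1)
    (hq₂ : ∀ n, 0 ≤ q₂ n) (hq₂0 : q₂ 0 = 0) (hq₂sum : ∑' n, q₂ n = 1)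
    (hΦ : ∀ t ∈ Ioo (0 : ℝ) 1, pgf p₁ t ≤ pgf p₂ t) {z : ℝ} (hz : z ∈ Ioo (0 : ℝ) 1)
    (hfix₁ : pgf q₁ z = z * pgf p₁ (pgf q₁ z)) (hfix₂ : pgf q₂ z = z * pgf p₂ (pgf q₂ z)) :
    pgf q₁ z ≤ pgf q₂ z := by
  have hzI : z ∈ Icc (0 : ℝ) 1 := Ioo_subset_Icc_self hz
  have hY₁ := pgf_le_self hq₁ hq₁0 hq₁sum hzI
  refine le_of_le_mul_of_eq_mul
    (convexOn_pgf hp₂ (summable_of_tsum_ne_zero (hp₂sum ▸ one_ne_zero)))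
    (by rw [pgf_one, hp₂sum]) hz.1.le hz.2 ⟨pgf_nonneg hq₁ hz.1.le, by linarith [hz.2]⟩
    (pgf_nonneg hq₂ hz.1.le) (pgf_le_self hq₂ hq₂0 hq₂sum hzI) hfix₂ ?_
  rcases (pgf_nonneg hq₁ hz.1.le).eq_or_lt with h0 | hpos
  · rw [← h0]
    exact mul_nonneg hz.1.le (pgf_nonneg hp₂ le_rfl)
  · exact hfix₁.trans_le
      (mul_le_mul_of_nonneg_left (hΦ _ ⟨hpos, hY₁.trans_lt hz.2⟩) hz.1.le)

lemma sq_one_sub_le_pow_sub {s : ℝ} (hs : s ∈ Icc (0 : ℝ) 1) {k : ℕ} (hk : 2 ≤ k) :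
    (1 - s) ^ 2 ≤ s ^ k - 1 - k * (s - 1) := by
  induction k, hk using Nat.le_induction with
  | base => exact le_of_eq (by push_cast; ring)
  | succ k _ ih =>
    have hsk : s ^ k ≤ 1 := pow_le_one₀ hs.1 hs.2
    push_cast
    rw [pow_succ s k]
    nlinarith [mul_nonneg (sub_nonneg.2 hs.2) (sub_nonneg.2 hsk)]

lemma add_mul_sq_le_pgf {p : ℕ → ℝ} (hp : ∀ k, 0 ≤ p k) (hsum : ∑' k, p k = 1)
    (hcrit : ∑' k : ℕ, (k : ℝ) * p k = 1) {k₀ : ℕ} (hk₀ : 2 ≤ k₀) {s : ℝ} (hs : s ∈ Icc (0 : ℝ) 1) :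
    s + p k₀ * (1 - s) ^ 2 ≤ pgf p s := by
  have hs₀ := summable_of_tsum_ne_zero (hsum ▸ one_ne_zero)
  have hs₁ := summable_of_tsum_ne_zero (hcrit ▸ one_ne_zero)
  have hA := summable_mul_pow hp hs₀ hs
  have hB : Summable fun k : ℕ => p k + k * p k * (s - 1) := hs₀.add (hs₁.mul_right _)
  have htsum : ∑' k : ℕ, (p k * s ^ k - (p k + k * p k * (s - 1))) = pgf p s - s := by
    rw [hA.tsum_sub hB, hs₀.tsum_add (hs₁.mul_right _), tsum_mul_right, hsum, hcrit, pgf]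
    ring
  have hbernoulli : ∀ k : ℕ, 0 ≤ p k * s ^ k - (p k + k * p k * (s - 1)) := fun k => by
    have := one_add_mul_le_pow (by linarith [hs.1] : (-2 : ℝ) ≤ s - 1) k
    rw [add_sub_cancel] at this
    nlinarith [mul_le_mul_of_nonneg_left this (hp k)]
  have hk₀term := (hA.sub hB).le_tsum k₀ fun k _ => hbernoulli k
  rw [htsum] at hk₀term
  nlinarith [mul_le_mul_of_nonneg_left (sq_one_sub_le_pow_sub hs hk₀) (hp k₀)]

lemma exists_two_le_pos_of_variance_pos {p : ℕ → ℝ} (hp : ∀ k, 0 ≤ p k)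
    (hσ : 0 < ∑' k : ℕ, (k : ℝ) * (k - 1) * p k) : ∃ k, 2 ≤ k ∧ 0 < p k := by
  by_contra! h
  have hzero : ∀ k : ℕ, (k : ℝ) * (k - 1) * p k = 0 := fun k => by
    rcases lt_or_ge k 2 with hk | hk
    · interval_cases k <;> simp
    · simp [le_antisymm (h k hk) (hp k)]
  simp [hzero] at hσ

lemma sq_one_sub_le_of_mul_add_mul_sq_le {a c z : ℝ} (hc : 0 < c) (ha : a ∈ Icc (0 : ℝ) 1)
    (hz : z ∈ Ioo (0 : ℝ) 1) (h : z * (a + c * (1 - a) ^ 2) ≤ a) :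
    (1 - a) ^ 2 ≤ (2 / c + 2) * (1 - z) := by
  have hsq : (1 - a) ^ 2 ≤ 1 := by nlinarith [ha.1, ha.2]
  have hcz : c * z * (1 - a) ^ 2 ≤ 1 - z := by nlinarith [ha.1, ha.2, hz.1, hz.2]
  have h2c : 0 ≤ 2 / c * (1 - z) := by have := hz.2; positivity
  rcases le_or_gt (1 / 2) z with hz2 | hz2
  · have : c * (1 - a) ^ 2 ≤ 2 * (1 - z) := by
      nlinarith [mul_le_mul_of_nonneg_left (by linarith : 1 ≤ 2 * z)
        (by positivity : 0 ≤ c * (1 - a) ^ 2)]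
    have : (1 - a) ^ 2 ≤ 2 / c * (1 - z) := by
      rw [div_mul_eq_mul_div, le_div_iff₀ hc]; linarith
    nlinarith [hz.2]
  · nlinarith

lemma exists_one_sub_pgf_exp_neg_le {p q : ℕ → ℝ} (hp : ∀ k, 0 ≤ p k) (hpsum : ∑' k, p k = 1)
    (hcrit : ∑' k : ℕ, (k : ℝ) * p k = 1) (hσ : 0 < ∑' k : ℕ, (k : ℝ) * (k - 1) * p k)
    (hq : ∀ n, 0 ≤ q n) (hq0 : q 0 = 0) (hqsum : ∑' n, q n = 1)
    (hfix : ∀ z ∈ Icc (0 : ℝ) 1, pgf q z = z * pgf p (pgf q z)) :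
    ∃ K, ∀ t : ℝ, 0 < t → 1 - pgf q (Real.exp (-t)) ≤ K * t ^ (1 / 2 : ℝ) := by
  obtain ⟨k₀, hk₀, hpk₀⟩ := exists_two_le_pos_of_variance_pos hp hσ
  refine ⟨√(2 / p k₀ + 2), fun t ht => ?_⟩
  set z := Real.exp (-t)
  have hz : z ∈ Ioo (0 : ℝ) 1 := exp_neg_mem_Ioo ht
  have hzI : z ∈ Icc (0 : ℝ) 1 := Ioo_subset_Icc_self hz
  have ha : pgf q z ∈ Icc (0 : ℝ) 1 :=
    ⟨pgf_nonneg hq hz.1.le, (pgf_le_self hq hq0 hqsum hzI).trans hz.2.le⟩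
  have hsq := sq_one_sub_le_of_mul_add_mul_sq_le hpk₀ ha hz <| by
    calc z * (pgf q z + p k₀ * (1 - pgf q z) ^ 2) ≤ z * pgf p (pgf q z) :=
          mul_le_mul_of_nonneg_left (add_mul_sq_le_pgf hp hpsum hcrit hk₀ ha) hz.1.le
      _ = pgf q z := (hfix z hzI).symm
  have hzt : 1 - z ≤ t := by linarith [Real.add_one_le_exp (-t)]
  rw [← Real.sqrt_eq_rpow, ← Real.sqrt_mul (by positivity)]
  exact Real.le_sqrt_of_sq_le (hsq.trans (mul_le_mul_of_nonneg_left hzt (by positivity)))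

lemma lintegral_rpow_mul_comp_mul (g : ℝ → ℝ) (α : ℝ) {c : ℝ} (hc : 0 < c) :
    ∫⁻ t in Ioi 0, ENNReal.ofReal (t ^ (-α - 1) * g (c * t))
      = ENNReal.ofReal (c ^ α) * ∫⁻ x in Ioi 0, ENNReal.ofReal (x ^ (-α - 1) * g x) := by
  have hpow : c ^ α * c * c ^ (-α - 1) = 1 := by
    rw [← Real.rpow_add_one hc.ne', ← Real.rpow_add hc]
    ring_nf
    exact Real.rpow_zero c
  have hcv := lintegral_image_eq_lintegral_abs_deriv_mul (measurableSet_Ioi (a := 0))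
    (fun x _ => by simpa using ((hasDerivAt_id x).const_mul c).hasDerivWithinAt)
    (mul_right_injective₀ hc.ne').injOn fun x => ENNReal.ofReal (x ^ (-α - 1) * g x)
  rw [image_mul_left_Ioi hc, mul_zero] at hcv
  rw [hcv, ← lintegral_const_mul' _ _ ENNReal.ofReal_ne_top]
  refine setLIntegral_congr_fun measurableSet_Ioi fun t (ht : 0 < t) => ?_
  rw [abs_of_pos hc, ← ENNReal.ofReal_mul hc.le, ← ENNReal.ofReal_mul (by positivity),
    Real.mul_rpow hc.le ht.le]
  congr 1
  linear_combination -(t ^ (-α - 1) * g (c * t)) * hpow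

/-- Since `n ^ α ∫ x^(-α-1) g x = ∫ t^(-α-1) g (n t)`, a moment of `q` times the Mellin integral of
`g` is the Mellin integral of the series `∑ q n g (n t)`. -/
lemma tsum_rpow_mul_mul_lintegral {q : ℕ → ℝ} (hq : ∀ n, 0 ≤ q n) (hq0 : q 0 = 0) (α : ℝ)
    {g : ℝ → ℝ} (hg : Measurable g) :
    (∑' n : ℕ, ENNReal.ofReal (n ^ α * q n)) * ∫⁻ x in Ioi 0, ENNReal.ofReal (x ^ (-α - 1) * g x)
      = ∫⁻ t in Ioi 0, ∑' n : ℕ, ENNReal.ofReal (q n * (t ^ (-α - 1) * g (n * t))) := by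
  rw [← ENNReal.tsum_mul_right, lintegral_tsum fun n => by fun_prop]
  refine tsum_congr fun n => ?_
  rcases n.eq_zero_or_pos with rfl | hn
  · simp [hq0]
  rw [mul_comm ((n : ℝ) ^ α), ENNReal.ofReal_mul (hq n), mul_assoc,
    ← lintegral_rpow_mul_comp_mul g α (Nat.cast_pos.2 hn),
    ← lintegral_const_mul' _ _ ENNReal.ofReal_ne_top]
  simp only [← ENNReal.ofReal_mul (hq n)]

lemma lintegral_rpow_mul_lt_top {α γ K : ℝ} (hα : 0 < α) (hαγ : α < γ) {f : ℝ → ℝ}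
    (hfK : ∀ t, 0 < t → f t ≤ K * t ^ γ) (hf1 : ∀ t, 0 < t → f t ≤ 1) :
    ∫⁻ t in Ioi 0, ENNReal.ofReal (t ^ (-α - 1) * f t) < ⊤ := by
  rw [← Ioc_union_Ioi_eq_Ioi zero_le_one, lintegral_union measurableSet_Ioi Ioc_disjoint_Ioi_same]
  refine ENNReal.add_lt_top.2 ⟨?_, ?_⟩
  · have hint : IntegrableOn (fun t : ℝ => K * t ^ (γ - α - 1)) (Ioc 0 1) :=
      ((intervalIntegrable_iff_integrableOn_Ioc_of_le zero_le_one).1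
        (intervalIntegral.intervalIntegrable_rpow' (by linarith))).const_mul K
    refine lt_of_le_of_lt (setLIntegral_mono' measurableSet_Ioc fun t ht => ?_)
      hint.lintegral_lt_top
    refine ENNReal.ofReal_le_ofReal ?_
    calc t ^ (-α - 1) * f t ≤ t ^ (-α - 1) * (K * t ^ γ) :=
          mul_le_mul_of_nonneg_left (hfK t ht.1) (Real.rpow_nonneg ht.1.le _)
      _ = K * t ^ (γ - α - 1) := by
          rw [sub_sub, sub_eq_add_neg γ, Real.rpow_add ht.1]
          ring_nf
  · refine lt_of_le_of_lt (setLIntegral_mono' measurableSet_Ioi fun t (ht : 1 < t) => ?_)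
      (integrableOn_Ioi_rpow_of_lt (a := -α - 1) (by linarith) one_pos).lintegral_lt_top
    exact ENNReal.ofReal_le_ofReal
      (mul_le_of_le_one_right (by positivity) (hf1 t (one_pos.trans ht)))

lemma lintegral_Ioi_pos {f : ℝ → ℝ} (hf : Measurable f) (hpos : ∀ x, 0 < x → 0 < f x) :
    0 < ∫⁻ x in Ioi 0, ENNReal.ofReal (f x) := by
  rw [setLIntegral_pos_iff hf.ennreal_ofReal]
  refine lt_of_lt_of_le ?_ (measure_mono fun x (hx : x ∈ Ioi 0) =>
    ⟨ENNReal.ofReal_pos.2 (hpos x hx) |>.ne', hx⟩)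
  simp

lemma exp_neg_natCast_mul (n : ℕ) (t : ℝ) : Real.exp (-(n * t)) = Real.exp (-t) ^ n := by
  rw [← Real.exp_nat_mul]
  ring_nf

lemma inv_mul_rpow_sub_one_le {x a : ℝ} (hx : 1 ≤ x) (ha : 0 < a) :
    a⁻¹ * (x ^ a - 1) ≤ x ^ a * Real.log x := by
  have hxa : 0 < x ^ a := Real.rpow_pos_of_pos (by linarith) a
  have hlog := Real.one_sub_inv_le_log_of_pos hxa
  rw [Real.log_rpow (by linarith)] at hlog
  rw [inv_mul_le_iff₀ ha]
  have := mul_le_mul_of_nonneg_left hlog hxa.le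
  rw [mul_sub, mul_inv_cancel₀ hxa.ne', mul_one] at this
  linarith

section Moments

variable {q q₁ q₂ : ℕ → ℝ}

lemma tsum_ofReal_mul_mul_pow (hq : ∀ n, 0 ≤ q n) (hs : Summable q) {c : ℝ} (hc : 0 ≤ c)
    {z : ℝ} (hz : z ∈ Icc (0 : ℝ) 1) :
    ∑' n, ENNReal.ofReal (q n * (c * z ^ n)) = ENNReal.ofReal (c * pgf q z) := by
  rw [pgf, ← tsum_mul_left, ENNReal.ofReal_tsum_of_nonneg
    (fun n => mul_nonneg hc (mul_nonneg (hq n) (pow_nonneg hz.1 n)))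
    ((summable_mul_pow hq hs hz).mul_left c)]
  simp only [mul_left_comm]

lemma tsum_ofReal_mul_mul_one_sub_pow (hq : ∀ n, 0 ≤ q n) (hqsum : ∑' n, q n = 1) {c : ℝ}
    (hc : 0 ≤ c) {z : ℝ} (hz : z ∈ Icc (0 : ℝ) 1) :
    ∑' n, ENNReal.ofReal (q n * (c * (1 - z ^ n))) = ENNReal.ofReal (c * (1 - pgf q z)) := by
  have hs := summable_of_tsum_ne_zero (hqsum ▸ one_ne_zero)
  have hsz := summable_mul_pow hq hs hz
  have hsum : ∑' n, c * (q n - q n * z ^ n) = c * (1 - pgf q z) := by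
    rw [tsum_mul_left, hs.tsum_sub hsz, hqsum, pgf]
  rw [← hsum, ENNReal.ofReal_tsum_of_nonneg
    (fun n => mul_nonneg hc (by nlinarith [hq n, pow_le_one₀ hz.1 hz.2 (n := n)]))
    ((hs.sub hsz).mul_left c)]
  congr 1 with n
  congr 1
  ring

lemma tsum_rpow_mul_mul_lintegral_exp (hq : ∀ n, 0 ≤ q n) (hq0 : q 0 = 0) (hs : Summable q)
    (α : ℝ) :
    (∑' n : ℕ, ENNReal.ofReal (n ^ α * q n))
        * ∫⁻ x in Ioi 0, ENNReal.ofReal (x ^ (-α - 1) * Real.exp (-x))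
      = ∫⁻ t in Ioi 0, ENNReal.ofReal (t ^ (-α - 1) * pgf q (Real.exp (-t))) := by
  rw [tsum_rpow_mul_mul_lintegral hq hq0 α (by fun_prop)]
  refine setLIntegral_congr_fun measurableSet_Ioi fun t (ht : 0 < t) => ?_
  simp only [exp_neg_natCast_mul]
  exact tsum_ofReal_mul_mul_pow hq hs (by positivity)
    (Ioo_subset_Icc_self (exp_neg_mem_Ioo ht))

lemma tsum_rpow_mul_mul_lintegral_one_sub_exp (hq : ∀ n, 0 ≤ q n) (hq0 : q 0 = 0)
    (hqsum : ∑' n, q n = 1) (α : ℝ) :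
    (∑' n : ℕ, ENNReal.ofReal (n ^ α * q n))
        * ∫⁻ x in Ioi 0, ENNReal.ofReal (x ^ (-α - 1) * (1 - Real.exp (-x)))
      = ∫⁻ t in Ioi 0, ENNReal.ofReal (t ^ (-α - 1) * (1 - pgf q (Real.exp (-t)))) := by
  rw [tsum_rpow_mul_mul_lintegral hq hq0 α (by fun_prop)]
  refine setLIntegral_congr_fun measurableSet_Ioi fun t (ht : 0 < t) => ?_
  simp only [exp_neg_natCast_mul]
  exact tsum_ofReal_mul_mul_one_sub_pow hq hqsum (by positivity)
    (Ioo_subset_Icc_self (exp_neg_mem_Ioo ht))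

lemma rpow_mul_nonneg (hq : ∀ n, 0 ≤ q n) (α : ℝ) (n : ℕ) : 0 ≤ (n : ℝ) ^ α * q n :=
  mul_nonneg (Real.rpow_nonneg n.cast_nonneg α) (hq n)

lemma summable_rpow_mul_of_nonpos (hq : ∀ n, 0 ≤ q n) (hq0 : q 0 = 0) (hs : Summable q)
    {α : ℝ} (hα : α ≤ 0) : Summable fun n : ℕ => (n : ℝ) ^ α * q n := by
  refine hs.of_nonneg_of_le (rpow_mul_nonneg hq α) fun n => ?_
  rcases n.eq_zero_or_pos with rfl | hn
  · simp [hq0]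
  · exact mul_le_of_le_one_left (hq n)
      (Real.rpow_le_one_of_one_le_of_nonpos (by exact_mod_cast hn) hα)

lemma tsum_rpow_mul_le_of_pgf_le (hq₁ : ∀ n, 0 ≤ q₁ n) (hq₁0 : q₁ 0 = 0)
    (hq₁sum : ∑' n, q₁ n = 1) (hq₂ : ∀ n, 0 ≤ q₂ n) (hq₂0 : q₂ 0 = 0) (hq₂sum : ∑' n, q₂ n = 1)
    (hY : ∀ z ∈ Ioo (0 : ℝ) 1, pgf q₁ z ≤ pgf q₂ z) {α : ℝ} (hα : α < 0) :
    ∑' n : ℕ, (n : ℝ) ^ α * q₁ n ≤ ∑' n : ℕ, (n : ℝ) ^ α * q₂ n := by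
  have hs₁ := summable_of_tsum_ne_zero (hq₁sum ▸ one_ne_zero)
  have hs₂ := summable_of_tsum_ne_zero (hq₂sum ▸ one_ne_zero)
  have hG0 : 0 < ∫⁻ x in Ioi 0, ENNReal.ofReal (x ^ (-α - 1) * Real.exp (-x)) :=
    lintegral_Ioi_pos (by fun_prop) fun x hx => by positivity
  have hGtop : ∫⁻ x in Ioi 0, ENNReal.ofReal (x ^ (-α - 1) * Real.exp (-x)) < ⊤ := by
    simpa only [mul_comm (Real.exp _)] using
      (Real.GammaIntegral_convergent (s := -α) (by linarith)).lintegral_lt_top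
  refine (summable_and_tsum_le_of_tsum_ofReal_le (rpow_mul_nonneg hq₁ α) (rpow_mul_nonneg hq₂ α)
    (summable_rpow_mul_of_nonpos hq₂ hq₂0 hs₂ hα.le) ?_).2
  rw [← ENNReal.mul_le_mul_iff_left hG0.ne' hGtop.ne, tsum_rpow_mul_mul_lintegral_exp hq₁ hq₁0 hs₁,
    tsum_rpow_mul_mul_lintegral_exp hq₂ hq₂0 hs₂]
  exact setLIntegral_mono' measurableSet_Ioi fun t (ht : 0 < t) => ENNReal.ofReal_le_ofReal <|
    mul_le_mul_of_nonneg_left (hY _ (exp_neg_mem_Ioo ht)) (Real.rpow_nonneg ht.le _)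

lemma lintegral_rpow_mul_one_sub_exp_pos (α : ℝ) :
    0 < ∫⁻ x in Ioi 0, ENNReal.ofReal (x ^ (-α - 1) * (1 - Real.exp (-x))) :=
  lintegral_Ioi_pos (by fun_prop) fun x hx =>
    mul_pos (Real.rpow_pos_of_pos hx _) (sub_pos.2 (exp_neg_mem_Ioo hx).2)

lemma lintegral_rpow_mul_one_sub_exp_lt_top {α : ℝ} (hα0 : 0 < α) (hα1 : α < 1) :
    ∫⁻ x in Ioi 0, ENNReal.ofReal (x ^ (-α - 1) * (1 - Real.exp (-x))) < ⊤ :=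
  lintegral_rpow_mul_lt_top (K := 1) hα0 hα1
    (fun t _ => by rw [Real.rpow_one, one_mul]; linarith [Real.add_one_le_exp (-t)])
    (fun t _ => by linarith [Real.exp_pos (-t)])

lemma summable_rpow_mul_of_one_sub_pgf_le (hq : ∀ n, 0 ≤ q n) (hq0 : q 0 = 0)
    (hqsum : ∑' n, q n = 1) {α γ K : ℝ} (hα : 0 < α) (hαγ : α < γ)
    (hK : ∀ t, 0 < t → 1 - pgf q (Real.exp (-t)) ≤ K * t ^ γ) :
    Summable fun n : ℕ => (n : ℝ) ^ α * q n := by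
  have hfin := lintegral_rpow_mul_lt_top hα hαγ hK fun t _ =>
    sub_le_self 1 (pgf_nonneg hq (Real.exp_pos _).le)
  rw [← tsum_rpow_mul_mul_lintegral_one_sub_exp hq hq0 hqsum] at hfin
  refine summable_of_tsum_ofReal_ne_top (rpow_mul_nonneg hq α) fun htop => ?_
  rw [htop, ENNReal.top_mul (lintegral_rpow_mul_one_sub_exp_pos α).ne'] at hfin
  exact lt_irrefl _ hfin

lemma summable_and_tsum_rpow_mul_le_of_pgf_le (hq₁ : ∀ n, 0 ≤ q₁ n) (hq₁0 : q₁ 0 = 0)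
    (hq₁sum : ∑' n, q₁ n = 1) (hq₂ : ∀ n, 0 ≤ q₂ n) (hq₂0 : q₂ 0 = 0) (hq₂sum : ∑' n, q₂ n = 1)
    (hY : ∀ z ∈ Ioo (0 : ℝ) 1, pgf q₁ z ≤ pgf q₂ z) {α : ℝ} (hα0 : 0 < α) (hα1 : α < 1)
    (hs₁ : Summable fun n : ℕ => (n : ℝ) ^ α * q₁ n) :
    (Summable fun n : ℕ => (n : ℝ) ^ α * q₂ n) ∧
      ∑' n : ℕ, (n : ℝ) ^ α * q₂ n ≤ ∑' n : ℕ, (n : ℝ) ^ α * q₁ n := by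
  refine summable_and_tsum_le_of_tsum_ofReal_le (rpow_mul_nonneg hq₂ α) (rpow_mul_nonneg hq₁ α)
    hs₁ ?_
  rw [← ENNReal.mul_le_mul_iff_left (lintegral_rpow_mul_one_sub_exp_pos α).ne'
    (lintegral_rpow_mul_one_sub_exp_lt_top hα0 hα1).ne,
    tsum_rpow_mul_mul_lintegral_one_sub_exp hq₁ hq₁0 hq₁sum,
    tsum_rpow_mul_mul_lintegral_one_sub_exp hq₂ hq₂0 hq₂sum]
  exact setLIntegral_mono' measurableSet_Ioi fun t (ht : 0 < t) => ENNReal.ofReal_le_ofReal <|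
    mul_le_mul_of_nonneg_left (sub_le_sub_left (hY _ (exp_neg_mem_Ioo ht)) 1)
      (Real.rpow_nonneg ht.le _)

lemma tsum_inv_mul_rpow_sub_one_mul (hqsum : ∑' n, q n = 1) {a : ℝ}
    (hs : Summable fun n : ℕ => (n : ℝ) ^ a * q n) :
    ∑' n : ℕ, a⁻¹ * ((n : ℝ) ^ a - 1) * q n = a⁻¹ * (∑' n : ℕ, (n : ℝ) ^ a * q n - 1) := by
  calc ∑' n : ℕ, a⁻¹ * ((n : ℝ) ^ a - 1) * q n = ∑' n : ℕ, a⁻¹ * ((n : ℝ) ^ a * q n - q n) :=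
        tsum_congr fun n => by ring
    _ = a⁻¹ * (∑' n : ℕ, (n : ℝ) ^ a * q n - ∑' n, q n) := by
        rw [tsum_mul_left, hs.tsum_sub (summable_of_tsum_ne_zero (hqsum ▸ one_ne_zero))]
    _ = _ := by rw [hqsum]

/-- Dominated convergence, with `n ^ β q n` dominating `a⁻¹ (n ^ a - 1) q n ≤ n ^ a log n q n`
for `a ≤ β / 2`. -/
lemma tendsto_tsum_inv_mul_rpow_sub_one_mul (hq : ∀ n, 0 ≤ q n) (hq0 : q 0 = 0) {β : ℝ}
    (hβ : 0 < β) (hs : Summable fun n : ℕ => (n : ℝ) ^ β * q n) :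
    Tendsto (fun a => ∑' n : ℕ, a⁻¹ * ((n : ℝ) ^ a - 1) * q n) (𝓝[>] 0)
      (𝓝 (∑' n : ℕ, q n * Real.log n)) := by
  refine tendsto_tsum_of_dominated_convergence (bound := fun n => 2 / β * ((n : ℝ) ^ β * q n))
    (hs.mul_left _) (fun n => ?_) ?_
  · rcases n.eq_zero_or_pos with rfl | hn
    · simp [hq0]
    · simpa only [mul_comm (q n)] using
        (tendsto_rpow_sub_one_log (Nat.cast_pos.2 hn)).mul_const (q n)
  · filter_upwards [Ioo_mem_nhdsGT (half_pos hβ)] with a ⟨ha0, haβ⟩ n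
    rcases n.eq_zero_or_pos with rfl | hn
    · simp [hq0]
    have hn1 : (1 : ℝ) ≤ n := by exact_mod_cast hn
    have hnonneg : 0 ≤ a⁻¹ * ((n : ℝ) ^ a - 1) :=
      mul_nonneg (inv_nonneg.2 ha0.le) (sub_nonneg.2 (Real.one_le_rpow hn1 ha0.le))
    have hlog : Real.log n ≤ (n : ℝ) ^ (β / 2) / (β / 2) :=
      Real.log_le_rpow_div n.cast_nonneg (half_pos hβ)
    have hpow : (n : ℝ) ^ a ≤ (n : ℝ) ^ (β / 2) := Real.rpow_le_rpow_of_exponent_le hn1 haβ.le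
    rw [Real.norm_of_nonneg (mul_nonneg hnonneg (hq n)), ← mul_assoc]
    refine mul_le_mul_of_nonneg_right ?_ (hq n)
    calc a⁻¹ * ((n : ℝ) ^ a - 1) ≤ (n : ℝ) ^ a * Real.log n := inv_mul_rpow_sub_one_le hn1 ha0
      _ ≤ (n : ℝ) ^ (β / 2) * ((n : ℝ) ^ (β / 2) / (β / 2)) :=
          mul_le_mul hpow hlog (Real.log_nonneg hn1) (by positivity)
      _ = 2 / β * (n : ℝ) ^ β := by
          rw [mul_div_assoc', ← Real.rpow_add (by linarith), add_halves]
          field_simp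

lemma tsum_mul_log_le_of_tsum_rpow_mul_le (hq₁ : ∀ n, 0 ≤ q₁ n) (hq₁0 : q₁ 0 = 0)
    (hq₁sum : ∑' n, q₁ n = 1) (hq₂ : ∀ n, 0 ≤ q₂ n) (hq₂0 : q₂ 0 = 0) (hq₂sum : ∑' n, q₂ n = 1)
    {ε : ℝ} (hε : 0 < ε)
    (h : ∀ a, 0 < a → a < ε → (Summable fun n : ℕ => (n : ℝ) ^ a * q₁ n) ∧
      (Summable fun n : ℕ => (n : ℝ) ^ a * q₂ n) ∧
      ∑' n : ℕ, (n : ℝ) ^ a * q₂ n ≤ ∑' n : ℕ, (n : ℝ) ^ a * q₁ n) :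
    ∑' n : ℕ, q₂ n * Real.log n ≤ ∑' n : ℕ, q₁ n * Real.log n := by
  obtain ⟨hs₁, hs₂, -⟩ := h (ε / 2) (half_pos hε) (half_lt_self hε)
  refine le_of_tendsto_of_tendsto (tendsto_tsum_inv_mul_rpow_sub_one_mul hq₂ hq₂0 (half_pos hε) hs₂)
    (tendsto_tsum_inv_mul_rpow_sub_one_mul hq₁ hq₁0 (half_pos hε) hs₁) ?_
  filter_upwards [Ioo_mem_nhdsGT hε] with a ⟨ha0, haε⟩
  obtain ⟨hs₁, hs₂, hle⟩ := h a ha0 haε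
  rw [tsum_inv_mul_rpow_sub_one_mul hq₂sum hs₂, tsum_inv_mul_rpow_sub_one_mul hq₁sum hs₁]
  exact mul_le_mul_of_nonneg_left (by linarith) (inv_nonneg.2 ha0.le)

end Moments

theorem stmt7_general
    (p₁ p₂ : ℕ → ℝ) (hp₁ : ∀ k, 0 ≤ p₁ k) (hp₂ : ∀ k, 0 ≤ p₂ k)
    (hpsum₁ : ∑' k, p₁ k = 1) (hpsum₂ : ∑' k, p₂ k = 1)
    (hcrit₁ : ∑' k : ℕ, (k : ℝ) * p₁ k = 1)
    (hσpos₁ : 0 < ∑' k : ℕ, (k : ℝ) * ((k : ℝ) - 1) * p₁ k)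
    (q₁ q₂ : ℕ → ℝ)
    (hq₁0 : q₁ 0 = 0) (hq₂0 : q₂ 0 = 0)
    (hq₁nn : ∀ n, 0 ≤ q₁ n) (hq₂nn : ∀ n, 0 ≤ q₂ n)
    (hq₁sum : ∑' n, q₁ n = 1) (hq₂sum : ∑' n, q₂ n = 1)
    (hfix₁ : ∀ z ∈ Set.Icc (0:ℝ) 1,
      (∑' n, q₁ n * z ^ n) = z * ∑' k, p₁ k * (∑' n, q₁ n * z ^ n) ^ k)
    (hfix₂ : ∀ z ∈ Set.Icc (0:ℝ) 1,
      (∑' n, q₂ n * z ^ n) = z * ∑' k, p₂ k * (∑' n, q₂ n * z ^ n) ^ k)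
    (hΦ : ∀ t ∈ Set.Ioo (0:ℝ) 1, (∑' k, p₁ k * t ^ k) ≤ ∑' k, p₂ k * t ^ k) :
    (∀ α : ℝ, α < 0 →
      (∑' n : ℕ, (n : ℝ) ^ α * q₁ n) ≤ ∑' n : ℕ, (n : ℝ) ^ α * q₂ n) ∧
    (∀ α : ℝ, 0 < α → α < 1/2 →
      (∑' n : ℕ, (n : ℝ) ^ α * q₂ n) ≤ ∑' n : ℕ, (n : ℝ) ^ α * q₁ n) ∧
    ((∑' n : ℕ, q₂ n * Real.log n) ≤ ∑' n : ℕ, q₁ n * Real.log n) := by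
  have hY : ∀ z ∈ Ioo (0 : ℝ) 1, pgf q₁ z ≤ pgf q₂ z := fun z hz =>
    pgf_le_pgf_of_fixed_point hp₂ hpsum₂ hq₁nn hq₁0 hq₁sum hq₂nn hq₂0 hq₂sum hΦ hz
      (hfix₁ z (Ioo_subset_Icc_self hz)) (hfix₂ z (Ioo_subset_Icc_self hz))
  obtain ⟨K, hK⟩ :=
    exists_one_sub_pgf_exp_neg_le hp₁ hpsum₁ hcrit₁ hσpos₁ hq₁nn hq₁0 hq₁sum hfix₁
  have hmoments : ∀ α : ℝ, 0 < α → α < 1 / 2 →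
      (Summable fun n : ℕ => (n : ℝ) ^ α * q₁ n) ∧ (Summable fun n : ℕ => (n : ℝ) ^ α * q₂ n) ∧
        ∑' n : ℕ, (n : ℝ) ^ α * q₂ n ≤ ∑' n : ℕ, (n : ℝ) ^ α * q₁ n := fun α hα0 hα1 => by
    have hs₁ := summable_rpow_mul_of_one_sub_pgf_le hq₁nn hq₁0 hq₁sum hα0 hα1 hK
    exact ⟨hs₁, summable_and_tsum_rpow_mul_le_of_pgf_le hq₁nn hq₁0 hq₁sum hq₂nn hq₂0 hq₂sum hY
      hα0 (by linarith) hs₁⟩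
  exact ⟨fun α hα => tsum_rpow_mul_le_of_pgf_le hq₁nn hq₁0 hq₁sum hq₂nn hq₂0 hq₂sum hY hα,
    fun α hα0 hα1 => (hmoments α hα0 hα1).2.2,
    tsum_mul_log_le_of_tsum_rpow_mul_le hq₁nn hq₁0 hq₁sum hq₂nn hq₂0 hq₂sum one_half_pos hmoments⟩

/-- Theorem 6.3 of the paper. If two critical offspring distributions with
variances in `(0,∞)` satisfy `Φ₁ ≤ Φ₂` on `(0,1)`, then `μ₁(α) ≤ μ₂(α)` for `α < 0`,
`μ₁(α) ≥ μ₂(α)` for `0 < α < 1/2`, and `μ₁' ≥ μ₂'`. -/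
theorem stmt7
    (p₁ p₂ : ℕ → ℝ) (hp₁ : ∀ k, 0 ≤ p₁ k) (hp₂ : ∀ k, 0 ≤ p₂ k)
    (hpsum₁ : ∑' k, p₁ k = 1) (hpsum₂ : ∑' k, p₂ k = 1)
    (hcrit₁ : ∑' k : ℕ, (k : ℝ) * p₁ k = 1) (hcrit₂ : ∑' k : ℕ, (k : ℝ) * p₂ k = 1)
    (hσfin₁ : Summable (fun k : ℕ => (k : ℝ) * ((k : ℝ) - 1) * p₁ k))
    (hσfin₂ : Summable (fun k : ℕ => (k : ℝ) * ((k : ℝ) - 1) * p₂ k))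
    (hσpos₁ : 0 < ∑' k : ℕ, (k : ℝ) * ((k : ℝ) - 1) * p₁ k)
    (hσpos₂ : 0 < ∑' k : ℕ, (k : ℝ) * ((k : ℝ) - 1) * p₂ k)
    (q₁ q₂ : ℕ → ℝ)
    (hq₁0 : q₁ 0 = 0) (hq₂0 : q₂ 0 = 0)
    (hq₁nn : ∀ n, 0 ≤ q₁ n) (hq₂nn : ∀ n, 0 ≤ q₂ n)
    (hq₁sum : ∑' n, q₁ n = 1) (hq₂sum : ∑' n, q₂ n = 1)
    (hfix₁ : ∀ z ∈ Set.Icc (0:ℝ) 1,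
      (∑' n, q₁ n * z ^ n) = z * ∑' k, p₁ k * (∑' n, q₁ n * z ^ n) ^ k)
    (hfix₂ : ∀ z ∈ Set.Icc (0:ℝ) 1,
      (∑' n, q₂ n * z ^ n) = z * ∑' k, p₂ k * (∑' n, q₂ n * z ^ n) ^ k)
    (hΦ : ∀ t ∈ Set.Ioo (0:ℝ) 1, (∑' k, p₁ k * t ^ k) ≤ ∑' k, p₂ k * t ^ k) :
    (∀ α : ℝ, α < 0 →
      (∑' n : ℕ, (n : ℝ) ^ α * q₁ n) ≤ ∑' n : ℕ, (n : ℝ) ^ α * q₂ n) ∧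
    (∀ α : ℝ, 0 < α → α < 1/2 →
      (∑' n : ℕ, (n : ℝ) ^ α * q₂ n) ≤ ∑' n : ℕ, (n : ℝ) ^ α * q₁ n) ∧
    ((∑' n : ℕ, q₂ n * Real.log n) ≤ ∑' n : ℕ, q₁ n * Real.log n) :=
  stmt7_general p₁ p₂ hp₁ hp₂ hpsum₁ hpsum₂ hcrit₁ hσpos₁ q₁ q₂ hq₁0 hq₂0 hq₁nn hq₂nn hq₁sum hq₂sum
    hfix₁ hfix₂ hΦ
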